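/- arXiv:1504.01708 — 4 statements merged into one kernel-verified Lean document; each statement's English description precedes it below -/
import Mathlib

section
/- Let V be a finite type with n elements, E : V → V → Prop a directed edge relation, W ≥ 0, and w₁, w₂ : V → V → ℝ weight functions with 0 ≤ w_j(u,v) ≤ W for every pair (u,v) with E u v (j = 1,2). Let c ≥ 0 and suppose that every simple cycle v₀, v₁, …, v_{t−1} (t ≥ 1, the vertices pairwise distinct, with E v_i v_{(i+1) mod t} for all i < t) satisfies ∑_{i<t} w₂(v_i, v_{(i+1) mod t}) ≤ c·t + ∑_{i<t} w₁(v_i, v_{(i+1) mod t}). Then for every infinite path π : ℕ → V (i.e., E (π i) (π(i+1)) for all i) and every k ≥ 1, ∑_{i<k} w₂(π(i), π(i+1)) ≤ n·W + c·k + ∑_{i<k} w₁(π(i), π(i+1)). -/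
private lemma prefix_sum_aux {V : Type} [Fintype V] (E : V → V → Prop)
    (W : ℝ) (hW : 0 ≤ W) (w₁ w₂ : V → V → ℝ)
    (hw₁ : ∀ u v, E u v → 0 ≤ w₁ u v ∧ w₁ u v ≤ W)
    (hw₂ : ∀ u v, E u v → 0 ≤ w₂ u v ∧ w₂ u v ≤ W)
    (c : ℝ) (hc : 0 ≤ c)
    (hcyc : ∀ (t : ℕ) (v : Fin (t + 1) → V), Function.Injective v →
      (∀ i : Fin (t + 1), E (v i) (v (i + 1))) →
      ∑ i : Fin (t + 1), w₂ (v i) (v (i + 1)) ≤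
        c * (t + 1) + ∑ i : Fin (t + 1), w₁ (v i) (v (i + 1))) :
    ∀ (k : ℕ) (π : ℕ → V), (∀ i, E (π i) (π (i + 1))) → 1 ≤ k →
    ∑ i ∈ Finset.range k, w₂ (π i) (π (i + 1)) ≤
      (Fintype.card V : ℝ) * W + c * k +
        ∑ i ∈ Finset.range k, w₁ (π i) (π (i + 1)) := by
  intro k
  induction k using Nat.strong_induction_on with
  | _ k IH =>
  intro π hπ hk
  by_cases hinj : ∀ i j, i < k → j < k → π i = π j → i = j
  · -- base case : all vertices distinct, so k ≤ card V
    have hkn : k ≤ Fintype.card V := by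
      have hi : Function.Injective (fun i : Fin k => π i) := by
        intro i j hij
        exact Fin.ext (hinj i j i.isLt j.isLt hij)
      simpa using Fintype.card_le_of_injective _ hi
    have h2 : ∑ i ∈ Finset.range k, w₂ (π i) (π (i+1)) ≤ (k : ℝ) * W := by
      calc ∑ i ∈ Finset.range k, w₂ (π i) (π (i+1)) ≤ ∑ _i ∈ Finset.range k, W :=
            Finset.sum_le_sum fun i _ => (hw₂ _ _ (hπ i)).2
        _ = (k : ℝ) * W := by simp
    have h1 : 0 ≤ ∑ i ∈ Finset.range k, w₁ (π i) (π (i+1)) :=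
      Finset.sum_nonneg fun i _ => (hw₁ _ _ (hπ i)).1
    have hkW : (k : ℝ) * W ≤ (Fintype.card V : ℝ) * W := by
      apply mul_le_mul_of_nonneg_right _ hW
      exact_mod_cast hkn
    nlinarith [mul_nonneg hc (Nat.cast_nonneg k : (0:ℝ) ≤ (k:ℝ))]
  · -- there is a repeated vertex : peel off a simple cycle
    push_neg at hinj
    obtain ⟨i, j, hik, hjk, hij, hne⟩ := hinj
    -- find the least b with a repetition before it
    have hrep : ∃ b, (∃ a, a < b ∧ π a = π b) := by
      rcases Nat.lt_or_ge i j with h | h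
      · exact ⟨j, i, h, hij⟩
      · exact ⟨i, j, lt_of_le_of_ne h (fun e => hne e.symm), hij.symm⟩
    classical
    let b := Nat.find hrep
    obtain ⟨a, hab, habπ⟩ : ∃ a, a < b ∧ π a = π b := Nat.find_spec hrep
    have hbk : b < k := by
      rcases Nat.lt_or_ge i j with h | h
      · exact lt_of_le_of_lt (Nat.find_min' hrep ⟨i, h, hij⟩) hjk
      · exact lt_of_le_of_lt
          (Nat.find_min' hrep ⟨j, lt_of_le_of_ne h (fun e => hne e.symm), hij.symm⟩) hik
    have hbmin : ∀ m, m < b → ¬ ∃ a, a < m ∧ π a = π m := fun m hm => Nat.find_min hrep hm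
    set d := b - a with hd
    have hd1 : 1 ≤ d := Nat.le_sub_of_add_le (by omega)
    set t := d - 1 with ht
    have htd : t + 1 = d := by omega
    have hadb : a + d = b := by omega
    -- the simple cycle
    set v : Fin (t + 1) → V := fun i => π (a + i.val) with hv
    have hvinj : Function.Injective v := by
      intro i j hvij
      by_contra hne'
      rcases Nat.lt_or_ge i.val j.val with h | h
      · exact hbmin (a + j.val) (by omega) ⟨a + i.val, by omega, hvij⟩
      · have h' : j.val < i.val := lt_of_le_of_ne h (fun e => hne' (Fin.ext e.symm))
        exact hbmin (a + i.val) (by omega) ⟨a + j.val, by omega, hvij.symm⟩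
    have hvE : ∀ i : Fin (t + 1), E (v i) (v (i + 1)) := by
      intro i
      rcases eq_or_ne i (Fin.last t) with h | h
      · subst h
        have h0 : ((Fin.last t + 1 : Fin (t+1))).val = 0 := by
          rw [Fin.val_add_one, if_pos rfl]
        simp only [hv, h0, Fin.val_last, Nat.add_zero]
        rw [habπ]
        have hb : b = (a + t) + 1 := by omega
        rw [hb]
        exact hπ (a + t)
      · have h1 : (i + 1 : Fin (t+1)).val = i.val + 1 := by
          rw [Fin.val_add_one, if_neg h]
        simp only [hv, h1]
        have ha : a + (i.val + 1) = (a + i.val) + 1 := by omega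
        rw [ha]
        exact hπ (a + i.val)
    have key : ∀ w : V → V → ℝ, (∀ u v, E u v → 0 ≤ w u v ∧ w u v ≤ W) →
        ∑ i : Fin (t + 1), w (v i) (v (i + 1)) =
        ∑ i ∈ Finset.range (t + 1), w (π (a + i)) (π (a + i + 1)) := by
      intro w _
      rw [← Fin.sum_univ_eq_sum_range]
      apply Finset.sum_congr rfl
      intro i _
      rcases eq_or_ne i (Fin.last t) with h | h
      · subst h
        have h0 : ((Fin.last t + 1 : Fin (t+1))).val = 0 := by
          rw [Fin.val_add_one, if_pos rfl]
        simp only [hv, h0, Fin.val_last, Nat.add_zero]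
        rw [habπ]
        have hb2 : b = a + t + 1 := by omega
        rw [hb2]
      · have h1 : (i + 1 : Fin (t+1)).val = i.val + 1 := by
          rw [Fin.val_add_one, if_neg h]
        simp only [hv, h1]
        have ha2 : a + (i.val + 1) = a + i.val + 1 := by omega
        rw [ha2]
    -- the shortened path
    set π' : ℕ → V := fun i => if i < a then π i else π (i + d) with hπ'
    have hπ'E : ∀ i, E (π' i) (π' (i + 1)) := by
      intro i
      simp only [hπ']
      rcases Nat.lt_or_ge (i + 1) a with h | h
      · rw [if_pos (show i < a by omega), if_pos h]; exact hπ i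
      rcases Nat.lt_or_ge i a with h' | h'
      · -- i + 1 = a
        have hia : i + 1 = a := by omega
        rw [if_pos h', if_neg (show ¬ i + 1 < a by omega)]
        have hb : i + 1 + d = b := by omega
        rw [hb, ← habπ, ← hia]
        exact hπ i
      · rw [if_neg (show ¬ i < a by omega), if_neg (show ¬ i + 1 < a by omega)]
        have hb : i + 1 + d = (i + d) + 1 := by omega
        rw [hb]
        exact hπ (i + d)
    set k' := k - d with hk'
    have hk'1 : 1 ≤ k' := by omega
    have hk'k : k' < k := by omega
    have hsplit : ∀ w : V → V → ℝ,
        ∑ i ∈ Finset.range k, w (π i) (π (i + 1)) =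
          ∑ i ∈ Finset.range k', w (π' i) (π' (i + 1)) +
            ∑ i ∈ Finset.range (t + 1), w (π (a + i)) (π (a + i + 1)) := by
      intro w
      have hksum : k = a + d + (k - b) := by omega
      have hk'sum : k' = a + (k - b) := by omega
      rw [hksum, Finset.sum_range_add, Finset.sum_range_add, hk'sum,
        Finset.sum_range_add, htd]
      have e1 : ∀ i ∈ Finset.range a, w (π' i) (π' (i + 1)) = w (π i) (π (i + 1)) := by
        intro i hi
        simp only [Finset.mem_range] at hi
        simp only [hπ']
        rw [if_pos hi]
        rcases Nat.lt_or_ge (i + 1) a with h | h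
        · rw [if_pos h]
        · have hia : i + 1 = a := by omega
          rw [if_neg (show ¬ i + 1 < a by omega)]
          have hb : i + 1 + d = b := by omega
          rw [hb, ← habπ, hia]
      have e2 : ∀ i ∈ Finset.range (k - b), w (π' (a + i)) (π' (a + i + 1)) =
          w (π (a + d + i)) (π (a + d + i + 1)) := by
        intro i _
        simp only [hπ']
        rw [if_neg (show ¬ a + i < a by omega), if_neg (show ¬ a + i + 1 < a by omega)]
        have e3 : a + i + d = a + d + i := by omega
        have e4 : a + i + 1 + d = a + d + i + 1 := by omega
        rw [e3, e4]
      rw [Finset.sum_congr rfl e1, Finset.sum_congr rfl e2]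
      ring
    have hIH := IH k' hk'k π' hπ'E hk'1
    have hc' := hcyc t v hvinj hvE
    rw [key w₁ hw₁, key w₂ hw₂] at hc'
    rw [hsplit w₁, hsplit w₂]
    have hcast : ((t : ℝ) + 1) = (d : ℝ) := by exact_mod_cast congrArg (Nat.cast : ℕ → ℝ) htd
    have hck : c * (k' : ℝ) + c * (d : ℝ) = c * (k : ℝ) := by
      rw [← mul_add]
      congr 1
      have : k' + d = k := by omega
      exact_mod_cast congrArg (Nat.cast : ℕ → ℝ) this
    nlinarith [hIH, hc']

/-- In a finite directed graph with two weight functions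
`w₁, w₂` taking values in `[0, W]` on edges, if every simple cycle
`v₀, …, v_t` (on `t + 1 ≥ 1` pairwise distinct vertices, indices taken
cyclically) satisfies `∑ w₂ ≤ c·(t+1) + ∑ w₁`, then along every infinite path
`π` and every `k ≥ 1` the prefix sums satisfy
`∑_{i<k} w₂ ≤ n·W + c·k + ∑_{i<k} w₁`, where `n` is the number of vertices. -/
theorem prefix_sum_le_of_cycles {V : Type} [Fintype V] (E : V → V → Prop)
    (W : ℝ) (hW : 0 ≤ W) (w₁ w₂ : V → V → ℝ)
    (hw₁ : ∀ u v, E u v → 0 ≤ w₁ u v ∧ w₁ u v ≤ W)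
    (hw₂ : ∀ u v, E u v → 0 ≤ w₂ u v ∧ w₂ u v ≤ W)
    (c : ℝ) (hc : 0 ≤ c)
    (hcyc : ∀ (t : ℕ) (v : Fin (t + 1) → V), Function.Injective v →
      (∀ i : Fin (t + 1), E (v i) (v (i + 1))) →
      ∑ i : Fin (t + 1), w₂ (v i) (v (i + 1)) ≤
        c * (t + 1) + ∑ i : Fin (t + 1), w₁ (v i) (v (i + 1)))
    (π : ℕ → V) (hπ : ∀ i, E (π i) (π (i + 1))) (k : ℕ) (hk : 1 ≤ k) :
    ∑ i ∈ Finset.range k, w₂ (π i) (π (i + 1)) ≤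
      (Fintype.card V : ℝ) * W + c * k +
        ∑ i ∈ Finset.range k, w₁ (π i) (π (i + 1)) := by
  exact prefix_sum_aux E W hW w₁ w₂ hw₁ hw₂ c hc hcyc k π hπ hk
end

section
/- Let V be a finite type with n elements, E : V → V → Prop, W ≥ 0, and w₁, w₂ : V → V → ℝ with 0 ≤ w_j(u,v) ≤ W whenever E u v (j = 1,2). Let c ≥ 0 and suppose every simple cycle v₀, …, v_{t−1} (t ≥ 1, pairwise distinct vertices, E v_i v_{(i+1) mod t} for all i < t) satisfies ∑_{i<t} w₂(v_i, v_{(i+1) mod t}) ≤ c·t + ∑_{i<t} w₁(v_i, v_{(i+1) mod t}). Then every infinite path π : ℕ → V (with E (π i) (π(i+1)) for all i) satisfies liminf_{k→∞} (1/k)·∑_{i<k} w₂(π(i), π(i+1)) ≤ c + liminf_{k→∞} (1/k)·∑_{i<k} w₁(π(i), π(i+1)). -/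
open Filter

lemma path_sum_key {V : Type} [Fintype V] (E : V → V → Prop)
    (W : ℝ) (hW : 0 ≤ W) (w₁ w₂ : V → V → ℝ)
    (hw₁ : ∀ u v, E u v → 0 ≤ w₁ u v ∧ w₁ u v ≤ W)
    (hw₂ : ∀ u v, E u v → 0 ≤ w₂ u v ∧ w₂ u v ≤ W)
    (c : ℝ) (hc : 0 ≤ c)
    (hcyc : ∀ (t : ℕ) (v : Fin (t + 1) → V), Function.Injective v →
      (∀ i : Fin (t + 1), E (v i) (v (i + 1))) →
      ∑ i : Fin (t + 1), w₂ (v i) (v (i + 1)) ≤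
        c * (t + 1) + ∑ i : Fin (t + 1), w₁ (v i) (v (i + 1)))
    (k : ℕ) :
    ∀ (π : ℕ → V), (∀ i, E (π i) (π (i + 1))) →
      ∑ i ∈ Finset.range k, w₂ (π i) (π (i + 1)) ≤
        c * k + ∑ i ∈ Finset.range k, w₁ (π i) (π (i + 1)) + (Fintype.card V) * W := by
  classical
  induction k using Nat.strong_induction_on with
  | _ k IH =>
    intro π hπ
    set n := Fintype.card V with hn
    by_cases hk : k ≤ n
    · have h2 : ∑ i ∈ Finset.range k, w₂ (π i) (π (i + 1)) ≤ (k : ℝ) * W := by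
        calc ∑ i ∈ Finset.range k, w₂ (π i) (π (i + 1))
            ≤ ∑ _i ∈ Finset.range k, W := Finset.sum_le_sum fun i _ => (hw₂ _ _ (hπ i)).2
          _ = (k : ℝ) * W := by simp [mul_comm]
      have h1 : (0:ℝ) ≤ ∑ i ∈ Finset.range k, w₁ (π i) (π (i + 1)) :=
        Finset.sum_nonneg fun i _ => (hw₁ _ _ (hπ i)).1
      have hkn : (k : ℝ) ≤ n := Nat.cast_le.2 hk
      have := mul_le_mul_of_nonneg_right hkn hW
      have hck : (0:ℝ) ≤ c * k := mul_nonneg hc (Nat.cast_nonneg _)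
      linarith
    · push_neg at hk
      -- find the earliest repetition
      have hP : ∃ b, ∃ a, a < b ∧ π a = π b := by
        have hninj : ¬ Function.Injective (fun i : Fin (n+1) => π i) := by
          intro h
          have := Fintype.card_le_of_injective _ h
          simp [hn] at this
        rw [Function.Injective] at hninj
        push_neg at hninj
        obtain ⟨i, j, hij, hne⟩ := hninj
        rcases lt_or_gt_of_ne (fun h : (i:ℕ) = (j:ℕ) => hne (Fin.ext h)) with h | h
        · exact ⟨j, i, h, hij⟩
        · exact ⟨i, j, h, hij.symm⟩
      set b := Nat.find hP with hbdef
      obtain ⟨a, hab, heq⟩ := Nat.find_spec hP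
      have hbn : b ≤ n := by
        obtain ⟨b', a', hab', heq'⟩ := hP
        by_contra hcon
        push_neg at hcon
        -- find minimal repeats within first n+1 values
        have hninj : ¬ Function.Injective (fun i : Fin (n+1) => π i) := by
          intro h
          have := Fintype.card_le_of_injective _ h
          simp [hn] at this
        rw [Function.Injective] at hninj
        push_neg at hninj
        obtain ⟨i, j, hij, hne⟩ := hninj
        rcases lt_or_gt_of_ne (fun h : (i:ℕ) = (j:ℕ) => hne (Fin.ext h)) with h | h
        · exact absurd (Nat.find_le ⟨i, h, hij⟩) (by omega : ¬ b ≤ (j:ℕ))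
        · exact absurd (Nat.find_le ⟨j, h, hij.symm⟩) (by omega : ¬ b ≤ (i:ℕ))
      have hinj : ∀ i j, i < b → j < b → π i = π j → i = j := by
        intro i j hi hj hijeq
        by_contra hne
        rcases lt_or_gt_of_ne hne with h | h
        · exact Nat.find_min hP hj ⟨i, h, hijeq⟩
        · exact Nat.find_min hP hi ⟨j, h, hijeq.symm⟩
      set m := b - a - 1 with hm
      have hb : b = a + m + 1 := by omega
      have hπa : π a = π (a + (m + 1)) := by rw [← Nat.add_assoc, ← hb]; exact heq
      -- the simple cycle
      set v : Fin (m+1) → V := fun i => π (a + i) with hv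
      have hveq : ∀ i : Fin (m+1), v (i+1) = π (a + i + 1) := by
        intro i
        by_cases h : (i:ℕ) < m
        · have h1 : ((i+1 : Fin (m+1)) : ℕ) = (i:ℕ) + 1 := by
            rw [Fin.val_add_one]
            split
            · next heq' => exact absurd (congrArg Fin.val heq') (by simp; omega)
            · rfl
          simp only [hv, h1]
          exact congrArg π (by omega)
        · have hi : (i:ℕ) = m := by omega
          have h1 : ((i+1 : Fin (m+1)) : ℕ) = 0 := by
            have : i = Fin.last m := Fin.ext hi
            rw [this, Fin.last_add_one]
            rfl
          simp only [hv, h1]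
          rw [Nat.add_zero, hπa, hi]
          exact congrArg π (by omega)
      have hvinj : Function.Injective v := by
        intro i j h
        have hi : a + (i:ℕ) < b := by omega
        have hj : a + (j:ℕ) < b := by omega
        have := hinj _ _ hi hj h
        exact Fin.ext (by omega)
      have hvE : ∀ i : Fin (m+1), E (v i) (v (i+1)) := by
        intro i
        rw [hveq]
        exact hπ (a + i)
      have hcyc' := hcyc m v hvinj hvE
      have hsumv : ∀ w : V → V → ℝ, ∑ i : Fin (m+1), w (v i) (v (i+1)) =
          ∑ i ∈ Finset.Ico a b, w (π i) (π (i+1)) := by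
        intro w
        rw [Finset.sum_Ico_eq_sum_range]
        have hba : b - a = m + 1 := by omega
        rw [hba, ← Fin.sum_univ_eq_sum_range (fun i => w (π (a + i)) (π (a + i + 1)))]
        exact Finset.sum_congr rfl fun i _ => by rw [hveq i]
      -- the shortened path
      set π' : ℕ → V := fun i => if i < a then π i else π (i + (m+1)) with hπ'
      have hπ'E : ∀ i, E (π' i) (π' (i+1)) := by
        intro i
        rcases lt_trichotomy (i+1) a with h | h | h
        · have hia : i < a := by omega
          simp only [hπ', if_pos hia, if_pos h]
          exact hπ i
        · have hia : i < a := by omega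
          simp only [hπ', if_pos hia, if_neg (by omega : ¬ i + 1 < a)]
          rw [h, ← hπa, ← h]
          exact hπ i
        · have hia : ¬ i < a := by omega
          simp only [hπ', if_neg hia, if_neg (by omega : ¬ i + 1 < a)]
          have : i + 1 + (m+1) = i + (m+1) + 1 := by omega
          rw [this]
          exact hπ (i + (m+1))
      set k' := k - (m+1) with hk'
      have hk'lt : k' < k := by omega
      have hak' : a ≤ k' := by omega
      have hbk : b ≤ k := by omega
      have hsplit : ∀ w : V → V → ℝ,
          ∑ i ∈ Finset.range k, w (π i) (π (i+1)) =
            (∑ i ∈ Finset.Ico a b, w (π i) (π (i+1))) +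
              ∑ i ∈ Finset.range k', w (π' i) (π' (i+1)) := by
        intro w
        have h1 : ∑ i ∈ Finset.range k, w (π i) (π (i+1)) =
            (∑ i ∈ Finset.Ico 0 a, w (π i) (π (i+1)))
              + (∑ i ∈ Finset.Ico a b, w (π i) (π (i+1)))
              + ∑ i ∈ Finset.Ico b k, w (π i) (π (i+1)) := by
          rw [Finset.sum_Ico_consecutive _ (by omega : 0 ≤ a) (by omega : a ≤ b),
            Finset.sum_Ico_consecutive _ (by omega : (0:ℕ) ≤ b) hbk, Finset.range_eq_Ico]
        have h2 : ∑ i ∈ Finset.range k', w (π' i) (π' (i+1)) =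
            (∑ i ∈ Finset.Ico 0 a, w (π' i) (π' (i+1)))
              + ∑ i ∈ Finset.Ico a k', w (π' i) (π' (i+1)) := by
          rw [Finset.sum_Ico_consecutive _ (by omega : 0 ≤ a) hak', Finset.range_eq_Ico]
        have h3 : ∑ i ∈ Finset.Ico 0 a, w (π' i) (π' (i+1)) =
            ∑ i ∈ Finset.Ico 0 a, w (π i) (π (i+1)) := by
          refine Finset.sum_congr rfl fun i hi => ?_
          have hia : i < a := (Finset.mem_Ico.1 hi).2
          by_cases h : i + 1 < a
          · simp only [hπ', if_pos hia, if_pos h]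
          · have hia1 : i + 1 = a := by omega
            simp only [hπ', if_pos hia, if_neg h]
            rw [hia1, ← hπa, ← hia1]
        have h4 : ∑ i ∈ Finset.Ico a k', w (π' i) (π' (i+1)) =
            ∑ i ∈ Finset.Ico b k, w (π i) (π (i+1)) := by
          rw [Finset.sum_Ico_eq_sum_range, Finset.sum_Ico_eq_sum_range]
          have hkk : k' - a = k - b := by omega
          rw [hkk]
          refine Finset.sum_congr rfl fun i _ => ?_
          have e1 : π' (a + i) = π (b + i) := by
            simp only [hπ', if_neg (by omega : ¬ a + i < a)]
            congr 1
            omega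
          have e2 : π' (a + i + 1) = π (b + i + 1) := by
            simp only [hπ', if_neg (by omega : ¬ a + i + 1 < a)]
            congr 1
            omega
          rw [e1, e2]
        rw [h1, h2, h3, h4]
        ring
      have IH' := IH k' hk'lt π' hπ'E
      rw [hsumv w₁, hsumv w₂] at hcyc'
      have hkk : (k : ℝ) = (m + 1 : ℕ) + (k' : ℕ) := by
        push_cast
        have : k = (m+1) + k' := by omega
        exact_mod_cast congrArg (Nat.cast : ℕ → ℝ) this
      rw [hsplit w₁, hsplit w₂, hkk]
      push_cast at hcyc' ⊢
      linarith


/-- In a finite directed graph with two weight functions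
`w₁, w₂` taking values in `[0, W]` on edges, if every simple cycle
(on `t + 1 ≥ 1` pairwise distinct vertices, indices taken cyclically)
satisfies `∑ w₂ ≤ c·(t+1) + ∑ w₁`, then along every infinite path `π` the
mean-payoff values satisfy
`liminf_k (1/k)·∑_{i<k} w₂ ≤ c + liminf_k (1/k)·∑_{i<k} w₁`. -/
theorem liminf_avg_le_of_cycles {V : Type} [Fintype V] (E : V → V → Prop)
    (W : ℝ) (hW : 0 ≤ W) (w₁ w₂ : V → V → ℝ)
    (hw₁ : ∀ u v, E u v → 0 ≤ w₁ u v ∧ w₁ u v ≤ W)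
    (hw₂ : ∀ u v, E u v → 0 ≤ w₂ u v ∧ w₂ u v ≤ W)
    (c : ℝ) (hc : 0 ≤ c)
    (hcyc : ∀ (t : ℕ) (v : Fin (t + 1) → V), Function.Injective v →
      (∀ i : Fin (t + 1), E (v i) (v (i + 1))) →
      ∑ i : Fin (t + 1), w₂ (v i) (v (i + 1)) ≤
        c * (t + 1) + ∑ i : Fin (t + 1), w₁ (v i) (v (i + 1)))
    (π : ℕ → V) (hπ : ∀ i, E (π i) (π (i + 1))) :
    Filter.liminf
        (fun k : ℕ => (∑ i ∈ Finset.range k, w₂ (π i) (π (i + 1))) / k) atTop ≤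
      c + Filter.liminf
        (fun k : ℕ => (∑ i ∈ Finset.range k, w₁ (π i) (π (i + 1))) / k) atTop := by
  set f : ℕ → ℝ := fun k => (∑ i ∈ Finset.range k, w₂ (π i) (π (i + 1))) / k with hf
  set g : ℕ → ℝ := fun k => (∑ i ∈ Finset.range k, w₁ (π i) (π (i + 1))) / k with hg
  set D : ℝ := (Fintype.card V) * W with hD
  have hD0 : 0 ≤ D := mul_nonneg (Nat.cast_nonneg _) hW
  have hg0 : ∀ k, 0 ≤ g k := fun k =>
    div_nonneg (Finset.sum_nonneg fun i _ => (hw₁ _ _ (hπ i)).1) (Nat.cast_nonneg _)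
  have hf0 : ∀ k, 0 ≤ f k := fun k =>
    div_nonneg (Finset.sum_nonneg fun i _ => (hw₂ _ _ (hπ i)).1) (Nat.cast_nonneg _)
  have hgW : ∀ k, g k ≤ W := by
    intro k
    rcases Nat.eq_zero_or_pos k with rfl | hk
    · simpa [hg] using hW
    · have hk' : (0:ℝ) < k := by exact_mod_cast hk
      rw [hg, div_le_iff₀ hk']
      calc ∑ i ∈ Finset.range k, w₁ (π i) (π (i + 1))
          ≤ ∑ _i ∈ Finset.range k, W := Finset.sum_le_sum fun i _ => (hw₁ _ _ (hπ i)).2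
        _ = W * k := by simp [mul_comm]
  have hbddg_below : atTop.IsBoundedUnder (· ≥ ·) g := isBoundedUnder_of ⟨0, fun k => hg0 k⟩
  have hbddg_above : atTop.IsBoundedUnder (· ≤ ·) g := isBoundedUnder_of ⟨W, fun k => hgW k⟩
  have hcobddg : atTop.IsCoboundedUnder (· ≥ ·) g := hbddg_above.isCoboundedUnder_ge
  have hkey : ∀ k : ℕ, 1 ≤ k → f k ≤ c + D / k + g k := by
    intro k hk
    have hk' : (0:ℝ) < k := by exact_mod_cast hk
    have h := path_sum_key E W hW w₁ w₂ hw₁ hw₂ c hc hcyc k π hπ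
    rw [hf, hg, div_le_iff₀ hk']
    calc ∑ i ∈ Finset.range k, w₂ (π i) (π (i + 1))
        ≤ c * k + ∑ i ∈ Finset.range k, w₁ (π i) (π (i + 1)) + D := h
      _ = (c + D / k + (∑ i ∈ Finset.range k, w₁ (π i) (π (i + 1))) / k) * k := by
          field_simp
          ring
  refine le_of_forall_pos_le_add ?_
  intro ε hε
  have htend : Tendsto (fun k : ℕ => D / k) atTop (nhds 0) :=
    tendsto_const_div_atTop_nhds_zero_nat D
  have hev : ∀ᶠ k : ℕ in atTop, f k ≤ (c + ε) + g k := by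
    have h1 : ∀ᶠ k : ℕ in atTop, D / k ≤ ε :=
      (htend.eventually (ge_mem_nhds hε))
    filter_upwards [h1, eventually_ge_atTop 1] with k hk1 hk2
    have := hkey k hk2
    linarith
  have h2 : Filter.liminf f atTop ≤ Filter.liminf (fun k => (c + ε) + g k) atTop := by
    refine liminf_le_liminf hev (isBoundedUnder_of ⟨0, fun k => hf0 k⟩) ?_
    exact IsBoundedUnder.isCoboundedUnder_ge
      (isBoundedUnder_of ⟨(c + ε) + W, fun k => by have := hgW k; linarith⟩)
  have h3 : Filter.liminf (fun k => (c + ε) + g k) atTop = (c + ε) + Filter.liminf g atTop :=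
    liminf_const_add atTop g (c + ε) hcobddg hbddg_below
  calc Filter.liminf f atTop ≤ (c + ε) + Filter.liminf g atTop := by rw [← h3]; exact h2
    _ = c + Filter.liminf g atTop + ε := by ring
end

section
/- Let V be a finite type, E : V → V → Prop, W ≥ 0, w₁, w₂ : V → V → ℝ with 0 ≤ w_j(u,v) ≤ W whenever E u v (j = 1,2), and let r > 0. If there exists an infinite path π : ℕ → V (with E (π i) (π(i+1)) for all i) such that liminf_{k→∞} (1/k)·∑_{i<k} w₂(π(i), π(i+1)) − liminf_{k→∞} (1/k)·∑_{i<k} w₁(π(i), π(i+1)) ≥ r, then there exists a simple cycle v₀, …, v_{t−1} (t ≥ 1, pairwise distinct vertices, E v_i v_{(i+1) mod t} for all i < t) such that ∑_{i<t} w₂(v_i, v_{(i+1) mod t}) − ∑_{i<t} w₁(v_i, v_{(i+1) mod t}) ≥ r·t. -/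
/-!
Put `g = w₂ - w₁`. If every simple cycle had mean `g`-weight below `r`, then, there being
finitely many simple cycles, all of them would have mean `g`-weight at most some `ρ < r`.
Repeatedly cutting a simple cycle out of a walk of length `k` leaves a walk shorter than
`card V`, so the walk's `g`-weight is at most `ρ * k + C`. Hence the averages of `g` along
`π` have `limsup ≤ ρ`, and `liminf (a + b) ≤ limsup a + liminf b` bounds the liminf gap by
`ρ < r`.
-/

open Filter Finset Topology

variable {V : Type*} {E : V → V → Prop}

def IsWalk (E : V → V → Prop) (π : ℕ → V) : Prop :=
  ∀ n, E (π n) (π (n + 1))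

def walkWeight (g : V → V → ℝ) (π : ℕ → V) (k : ℕ) : ℝ :=
  ∑ m ∈ range k, g (π m) (π (m + 1))

noncomputable def walkMean (g : V → V → ℝ) (π : ℕ → V) (k : ℕ) : ℝ :=
  walkWeight g π k / k

def IsSimpleCycle (E : V → V → Prop) {t : ℕ} (v : Fin (t + 1) → V) : Prop :=
  Function.Injective v ∧ ∀ m, E (v m) (v (m + 1))

def cycleWeight (g : V → V → ℝ) {t : ℕ} (v : Fin (t + 1) → V) : ℝ :=
  ∑ m, g (v m) (v (m + 1))

theorem exists_repeat_injOn [Fintype V] (π : ℕ → V) :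
    ∃ i t, i + t < Fintype.card V ∧ π (i + (t + 1)) = π i ∧
      Set.InjOn π (Set.Ico i (i + (t + 1))) := by
  classical
  have hrep : ∃ j, ∃ i < j, π i = π j := by
    obtain ⟨a, b, hab, h⟩ := Finite.exists_ne_map_eq_of_infinite π
    rcases hab.lt_or_gt with hlt | hlt
    exacts [⟨b, a, hlt, h⟩, ⟨a, b, hlt, h.symm⟩]
  set j := Nat.find hrep
  obtain ⟨i, hij, hπij⟩ := Nat.find_spec hrep
  have hinj : Set.InjOn π (Set.Iio j) := by
    intro a ha b hb hab
    by_contra hne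
    rcases Nat.lt_or_gt_of_ne hne with h | h
    · exact Nat.find_min hrep hb ⟨a, h, hab⟩
    · exact Nat.find_min hrep ha ⟨b, h, hab.symm⟩
  have hj : j ≤ Fintype.card V := by
    simpa using card_le_card_of_injOn π (fun _ _ => mem_univ _)
      (by rwa [coe_range] : Set.InjOn π (range j))
  obtain ⟨t, ht⟩ : ∃ t, j = i + (t + 1) := ⟨j - i - 1, by omega⟩
  rw [ht] at hinj hj
  exact ⟨i, t, by omega, ht ▸ hπij.symm, hinj.mono Set.Ico_subset_Iio_self⟩

section Cycle

variable {π : ℕ → V} {i t : ℕ}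

theorem apply_add_val_add_one (hrep : π (i + (t + 1)) = π i) (m : Fin (t + 1)) :
    π (i + ↑(m + 1)) = π (i + m + 1) := by
  rw [Fin.val_add_one]
  split_ifs with h
  · simp only [h, add_zero]
    exact hrep.symm
  · rfl

theorem IsWalk.isSimpleCycle (hπ : IsWalk E π) (hrep : π (i + (t + 1)) = π i)
    (hinj : Set.InjOn π (Set.Ico i (i + (t + 1)))) :
    IsSimpleCycle E fun m : Fin (t + 1) => π (i + m) := by
  refine ⟨fun a b hab => Fin.ext ?_, fun m => ?_⟩
  · have := hinj (by simp [Fin.is_le]) (by simp [Fin.is_le]) hab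
    omega
  · simpa only [apply_add_val_add_one hrep] using hπ (i + m)

theorem cycleWeight_eq_sum (g : V → V → ℝ) (hrep : π (i + (t + 1)) = π i) :
    cycleWeight g (fun m : Fin (t + 1) => π (i + m)) =
      ∑ m ∈ range (t + 1), g (π (i + m)) (π (i + m + 1)) := by
  simp only [cycleWeight, apply_add_val_add_one hrep]
  exact Fin.sum_univ_eq_sum_range (fun m => g (π (i + m)) (π (i + m + 1))) (t + 1)

end Cycle

/-- For `π (i + ℓ) = π i`, the walk `π` with the closed segment `π i, …, π (i + ℓ)` contracted
to its endpoint. -/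
def cutOut (π : ℕ → V) (i ℓ : ℕ) (n : ℕ) : V :=
  if n ≤ i then π n else π (n + ℓ)

section CutOut

variable {π : ℕ → V} {i ℓ : ℕ}

theorem cutOut_of_le {n : ℕ} (hn : n ≤ i) : cutOut π i ℓ n = π n :=
  if_pos hn

theorem cutOut_add (hrep : π (i + ℓ) = π i) (m : ℕ) :
    cutOut π i ℓ (i + m) = π (i + ℓ + m) := by
  unfold cutOut
  split_ifs with h
  · obtain rfl : m = 0 := by omega
    exact hrep.symm
  · rw [add_right_comm]

theorem IsWalk.cutOut (hπ : IsWalk E π) (hrep : π (i + ℓ) = π i) :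
    IsWalk E (cutOut π i ℓ) := by
  intro n
  rcases lt_or_ge n i with hn | hn
  · rw [cutOut_of_le hn.le, cutOut_of_le hn]
    exact hπ n
  · obtain ⟨m, rfl⟩ := Nat.exists_eq_add_of_le hn
    rw [cutOut_add hrep, add_assoc i m 1, cutOut_add hrep]
    exact hπ _

theorem walkWeight_add_eq_cutOut (g : V → V → ℝ) (hrep : π (i + ℓ) = π i) {k : ℕ}
    (hik : i ≤ k) :
    walkWeight g π (k + ℓ) =
      walkWeight g (cutOut π i ℓ) k + ∑ m ∈ range ℓ, g (π (i + m)) (π (i + m + 1)) := by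
  obtain ⟨r, rfl⟩ := Nat.exists_eq_add_of_le hik
  have hpre : ∀ m ∈ range i,
      g (cutOut π i ℓ m) (cutOut π i ℓ (m + 1)) = g (π m) (π (m + 1)) := fun m hm => by
    rw [cutOut_of_le (mem_range.1 hm).le, cutOut_of_le (mem_range.1 hm)]
  have hpost : ∀ m, g (cutOut π i ℓ (i + m)) (cutOut π i ℓ (i + m + 1)) =
      g (π (i + ℓ + m)) (π (i + ℓ + m + 1)) := fun m => by
    rw [add_assoc i m 1, cutOut_add hrep, cutOut_add hrep]
    rfl
  simp only [walkWeight, add_right_comm i r ℓ, sum_range_add, sum_congr rfl hpre, hpost,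
    add_assoc i ℓ]
  ring

end CutOut

theorem walkWeight_le_mul {g : V → V → ℝ} {M : ℝ} (hM : ∀ u v, E u v → g u v ≤ M)
    {π : ℕ → V} (hπ : IsWalk E π) (k : ℕ) : walkWeight g π k ≤ k * M := by
  calc walkWeight g π k ≤ ∑ _m ∈ range k, M := sum_le_sum fun m _ => hM _ _ (hπ m)
    _ = k * M := by simp

theorem walkWeight_le_of_cycleWeight_le [Fintype V] {g : V → V → ℝ} {M ρ : ℝ}
    (hM : ∀ u v, E u v → g u v ≤ M)
    (hρ : ∀ t (v : Fin (t + 1) → V), IsSimpleCycle E v → cycleWeight g v ≤ ρ * (t + 1))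
    {π : ℕ → V} (hπ : IsWalk E π) (k : ℕ) :
    walkWeight g π k ≤ ρ * k + Fintype.card V * |M - ρ| := by
  induction k using Nat.strong_induction_on generalizing π with
  | _ k ih =>
  rcases le_or_gt k (Fintype.card V) with hk | hk
  · calc walkWeight g π k ≤ k * M := walkWeight_le_mul hM hπ k
      _ = ρ * k + k * (M - ρ) := by ring
      _ ≤ ρ * k + k * |M - ρ| := by gcongr; exact le_abs_self _
      _ ≤ ρ * k + Fintype.card V * |M - ρ| := by gcongr
  · obtain ⟨i, t, hit, hrep, hinj⟩ := exists_repeat_injOn π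
    obtain ⟨k, rfl⟩ : ∃ k', k = k' + (t + 1) := ⟨k - (t + 1), by omega⟩
    have hcut := ih k (by omega) (hπ.cutOut hrep)
    have hcycle := hρ t _ (hπ.isSimpleCycle hrep hinj)
    rw [cycleWeight_eq_sum g hrep] at hcycle
    rw [walkWeight_add_eq_cutOut g hrep (by omega)]
    push_cast
    linarith

theorem exists_lt_forall_cycleWeight_le [Fintype V] {g : V → V → ℝ} {r : ℝ}
    (h : ∀ t (v : Fin (t + 1) → V), IsSimpleCycle E v → cycleWeight g v < r * (t + 1)) :
    ∃ ρ < r, ∀ t (v : Fin (t + 1) → V), IsSimpleCycle E v → cycleWeight g v ≤ ρ * (t + 1) := by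
  have hev : ∀ᶠ ρ in 𝓝[<] r, ∀ t ∈ range (Fintype.card V), ∀ v : Fin (t + 1) → V,
      IsSimpleCycle E v → cycleWeight g v ≤ ρ * (t + 1) := by
    simp only [eventually_all_finset, eventually_all]
    intro t _ v hv
    have hmul : Tendsto (fun ρ : ℝ => ρ * (t + 1)) (𝓝[<] r) (𝓝 (r * (t + 1))) :=
      ((continuous_mul_const _).tendsto r).mono_left nhdsWithin_le_nhds
    exact (hmul.eventually_const_lt (h t v hv)).mono fun _ => le_of_lt
  obtain ⟨ρ, hρ, hρr⟩ := (hev.and self_mem_nhdsWithin).exists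
  refine ⟨ρ, hρr, fun t v hv => hρ t (mem_range.2 ?_) v hv⟩
  simpa using Fintype.card_le_of_injective v hv.1

theorem cycleWeight_sub (g₁ g₂ : V → V → ℝ) {t : ℕ} (v : Fin (t + 1) → V) :
    cycleWeight (g₂ - g₁) v = cycleWeight g₂ v - cycleWeight g₁ v :=
  sum_sub_distrib ..

theorem walkMean_sub (g₁ g₂ : V → V → ℝ) (π : ℕ → V) :
    walkMean (g₂ - g₁) π = walkMean g₂ π - walkMean g₁ π := by
  ext k
  simp only [walkMean, walkWeight, Pi.sub_apply, sum_sub_distrib, sub_div]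

theorem abs_walkMean_le {g : V → V → ℝ} {M : ℝ} (hM : ∀ u v, |g u v| ≤ M) (π : ℕ → V)
    (k : ℕ) : |walkMean g π k| ≤ M := by
  have hM₀ : 0 ≤ M := (abs_nonneg _).trans (hM (π 0) (π 0))
  rcases k.eq_zero_or_pos with rfl | hk
  · simpa [walkMean] using hM₀
  rw [walkMean, abs_div, Nat.abs_cast, div_le_iff₀ (by positivity)]
  calc |walkWeight g π k| ≤ ∑ m ∈ range k, |g (π m) (π (m + 1))| := abs_sum_le_sum_abs _ _
    _ ≤ ∑ _m ∈ range k, M := sum_le_sum fun m _ => hM _ _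
    _ = M * k := by simp [mul_comm]

theorem isBoundedUnder_abs_walkMean [Finite V] (g : V → V → ℝ) (π : ℕ → V) :
    IsBoundedUnder (· ≤ ·) atTop fun k => |walkMean g π k| := by
  obtain ⟨M, hM⟩ := Finite.exists_le fun p : V × V => |g p.1 p.2|
  exact isBoundedUnder_of ⟨M, abs_walkMean_le (fun u v => hM (u, v)) π⟩

theorem limsup_walkMean_le [Finite V] {g : V → V → ℝ} {ρ C : ℝ} {π : ℕ → V}
    (hC : ∀ k, walkWeight g π k ≤ ρ * k + C) :
    limsup (walkMean g π) atTop ≤ ρ := by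
  have hlim : Tendsto (fun k : ℕ => ρ + C / k) atTop (𝓝 ρ) := by
    simpa using tendsto_const_nhds.add (tendsto_const_div_atTop_nhds_zero_nat C)
  refine (limsup_le_limsup ?_ ?_ hlim.isBoundedUnder_le).trans_eq hlim.limsup_eq
  · filter_upwards [eventually_gt_atTop 0] with k hk
    rw [walkMean, div_le_iff₀ (by positivity), add_mul, div_mul_cancel₀ _ (by positivity)]
    exact hC k
  · exact (isBoundedUnder_le_abs.1 (isBoundedUnder_abs_walkMean g π)).2.isCoboundedUnder_le

theorem exists_cycle_of_liminf_gap_general {V : Type} [Fintype V] (E : V → V → Prop)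
    (w₁ w₂ : V → V → ℝ)
    (r : ℝ)
    (hpath : ∃ π : ℕ → V, (∀ i, E (π i) (π (i + 1))) ∧
      Filter.liminf
          (fun k : ℕ => (∑ i ∈ Finset.range k, w₂ (π i) (π (i + 1))) / k) atTop -
        Filter.liminf
          (fun k : ℕ => (∑ i ∈ Finset.range k, w₁ (π i) (π (i + 1))) / k) atTop
        ≥ r) :
    ∃ (t : ℕ) (v : Fin (t + 1) → V), Function.Injective v ∧
      (∀ i : Fin (t + 1), E (v i) (v (i + 1))) ∧
      ∑ i : Fin (t + 1), w₂ (v i) (v (i + 1)) -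
          ∑ i : Fin (t + 1), w₁ (v i) (v (i + 1)) ≥ r * (t + 1) := by
  obtain ⟨π, hπ, hgap⟩ := hpath
  by_contra! hcycle
  obtain ⟨ρ, hρr, hρ⟩ := exists_lt_forall_cycleWeight_le (E := E) (g := w₂ - w₁)
    fun t v hv => (cycleWeight_sub w₁ w₂ v).trans_lt (hcycle t v hv.1 hv.2)
  obtain ⟨M, hM⟩ := Finite.exists_le fun p : V × V => (w₂ - w₁) p.1 p.2
  have hlimsup : limsup (walkMean (w₂ - w₁) π) atTop ≤ ρ :=
    limsup_walkMean_le fun k => walkWeight_le_of_cycleWeight_le (fun u v _ => hM (u, v)) hρ hπ k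
  obtain ⟨hd₁, hd₂⟩ := isBoundedUnder_le_abs.1 (isBoundedUnder_abs_walkMean (w₂ - w₁) π)
  obtain ⟨ha₁, ha₂⟩ := isBoundedUnder_le_abs.1 (isBoundedUnder_abs_walkMean w₁ π)
  have hliminf := liminf_add_le hd₂ hd₁ ha₂ ha₁.isCoboundedUnder_ge
  rw [walkMean_sub] at hlimsup hliminf
  rw [sub_add_cancel] at hliminf
  change liminf (walkMean w₂ π) atTop - liminf (walkMean w₁ π) atTop ≥ r at hgap
  linarith

/-- In a finite directed graph with two weight functions
`w₁, w₂` taking values in `[0, W]` on edges and `r > 0`: if some infinite path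
`π` satisfies `liminf_k (1/k)·∑_{i<k} w₂ − liminf_k (1/k)·∑_{i<k} w₁ ≥ r`, then
there is a simple cycle `v₀, …, v_t` (on `t + 1 ≥ 1` pairwise distinct
vertices, indices taken cyclically) with `∑ w₂ − ∑ w₁ ≥ r·(t+1)`. -/
theorem exists_cycle_of_liminf_gap {V : Type} [Fintype V] (E : V → V → Prop)
    (W : ℝ) (hW : 0 ≤ W) (w₁ w₂ : V → V → ℝ)
    (hw₁ : ∀ u v, E u v → 0 ≤ w₁ u v ∧ w₁ u v ≤ W)
    (hw₂ : ∀ u v, E u v → 0 ≤ w₂ u v ∧ w₂ u v ≤ W)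
    (r : ℝ) (hr : 0 < r)
    (hpath : ∃ π : ℕ → V, (∀ i, E (π i) (π (i + 1))) ∧
      Filter.liminf
          (fun k : ℕ => (∑ i ∈ Finset.range k, w₂ (π i) (π (i + 1))) / k) atTop -
        Filter.liminf
          (fun k : ℕ => (∑ i ∈ Finset.range k, w₁ (π i) (π (i + 1))) / k) atTop
        ≥ r) :
    ∃ (t : ℕ) (v : Fin (t + 1) → V), Function.Injective v ∧
      (∀ i : Fin (t + 1), E (v i) (v (i + 1))) ∧
      ∑ i : Fin (t + 1), w₂ (v i) (v (i + 1)) -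
          ∑ i : Fin (t + 1), w₁ (v i) (v (i + 1)) ≥ r * (t + 1) :=
  exists_cycle_of_liminf_gap_general E w₁ w₂ r hpath
end

section
/- Let G = (V, V_E, E, w, v_I) be a weighted arena with maximum absolute weight W. Define G_min as the weighted arena with vertex set V × X where X = {w(e) : e ∈ E}, Eve's vertices {(v,n) : v ∈ V_E}, initial vertex (v_I, W), an edge from (u,n) to (v,m) if and only if (u,v) ∈ E and m = min(n, w(u,v)), with weight m on this edge. Then the regret of G under the Inf payoff (both players unrestricted) equals the regret of G_min under the LimInf payoff, and also equals the regret of G_min under the LimSup payoff. Dually, defining G_max with max in place of min and initial vertex (v_I, −W), the regret of G under the Sup payoff equals the regret of G_max under the LimSup payoff (equivalently under the LimInf payoff). -/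
open Filter
open scoped Classical

/-- A weighted arena `(V, V_∃, E, w, v_I)`: `VE` is the set of vertices owned
by Eve (the rest belong to Adam), `E` is the edge relation, `w` the weight
function (only relevant on edges), and `init` the initial vertex. -/
structure Arena (V : Type) where
  VE : Set V
  E : V → V → Prop
  w : V → V → ℝ
  init : V

namespace Arena

variable {V : Type} (A : Arena V)

/-- The arena is total: every vertex has an outgoing edge. -/
def Total : Prop := ∀ v, ∃ u, A.E v u

/-- `l` is a finite `E`-path from the initial vertex ending in `v`. -/
def IsHist (l : List V) (v : V) : Prop :=
  l.Chain' A.E ∧ l.head? = some A.init ∧ l.getLast? = some v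

/-- A strategy for Eve: on every history ending in a vertex of Eve it picks a
successor of that vertex. -/
def EveStrat (σ : List V → V) : Prop :=
  ∀ l v, A.IsHist l v → v ∈ A.VE → A.E v (σ l)

/-- A strategy for Adam: on every history ending in a vertex of Adam it picks
a successor of that vertex. -/
def AdamStrat (τ : List V → V) : Prop :=
  ∀ l v, A.IsHist l v → v ∉ A.VE → A.E v (τ l)

/-- The prefixes (histories) of the unique play consistent with `σ` and `τ`. -/
noncomputable def hist (σ τ : List V → V) : ℕ → List V := fun n =>
  Nat.rec [A.init]
    (fun _ l => l ++ [if l.getLastD A.init ∈ A.VE then σ l else τ l]) n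

/-- The unique play consistent with `σ` and `τ`. -/
noncomputable def play (σ τ : List V → V) (n : ℕ) : V :=
  (A.hist σ τ n).getLastD A.init

/-- The `Inf` payoff of a play: the infimum of the weights seen. -/
noncomputable def InfVal (π : ℕ → V) : ℝ := ⨅ i : ℕ, A.w (π i) (π (i + 1))

/-- The `Sup` payoff of a play: the supremum of the weights seen. -/
noncomputable def SupVal (π : ℕ → V) : ℝ := ⨆ i : ℕ, A.w (π i) (π (i + 1))

/-- The `LimInf` payoff of a play. -/
noncomputable def LimInfVal (π : ℕ → V) : ℝ :=
  Filter.liminf (fun i : ℕ => A.w (π i) (π (i + 1))) atTop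

/-- The `LimSup` payoff of a play. -/
noncomputable def LimSupVal (π : ℕ → V) : ℝ :=
  Filter.limsup (fun i : ℕ => A.w (π i) (π (i + 1))) atTop

/-- The mean-payoff (defined with `liminf`) of a play. -/
noncomputable def MPVal (π : ℕ → V) : ℝ :=
  Filter.liminf
    (fun k : ℕ => (∑ i ∈ Finset.range k, A.w (π i) (π (i + 1))) / k) atTop

/-- The mean-payoff (defined with `limsup`) of a play. -/
noncomputable def MPBarVal (π : ℕ → V) : ℝ :=
  Filter.limsup
    (fun k : ℕ => (∑ i ∈ Finset.range k, A.w (π i) (π (i + 1))) / k) atTop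

/-- The regret of the arena w.r.t. a payoff `val`, where Eve's strategies are
restricted by `PE` and Adam's by `PA`. -/
noncomputable def regretPP (val : (ℕ → V) → ℝ)
    (PE PA : (List V → V) → Prop) : ℝ :=
  ⨅ σ : {σ : List V → V // A.EveStrat σ ∧ PE σ},
    ⨆ τ : {τ : List V → V // A.AdamStrat τ ∧ PA τ},
      ((⨆ σ' : {σ' : List V → V // A.EveStrat σ' ∧ PE σ'},
          val (A.play σ'.1 τ.1)) - val (A.play σ.1 τ.1))

/-- The regret of the arena w.r.t. a payoff `val`, both players unrestricted. -/
noncomputable def regret (val : (ℕ → V) → ℝ) : ℝ :=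
  A.regretPP val (fun _ => True) (fun _ => True)

/-- The antagonistic value. -/
noncomputable def aVal (val : (ℕ → V) → ℝ) : ℝ :=
  ⨆ σ : {σ : List V → V // A.EveStrat σ},
    ⨅ τ : {τ : List V → V // A.AdamStrat τ}, val (A.play σ.1 τ.1)

/-- The cooperative value. -/
noncomputable def cVal (val : (ℕ → V) → ℝ) : ℝ :=
  ⨆ σ : {σ : List V → V // A.EveStrat σ},
    ⨆ τ : {τ : List V → V // A.AdamStrat τ}, val (A.play σ.1 τ.1)

/-- The same arena with the initial vertex moved to `v`. -/
def withInit (v : V) : Arena V := { A with init := v }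

end Arena

/-- The arena `G_min`: vertices record the minimal weight seen so far, the
weight of an edge is the recorded minimum, and the initial vertex records the
value `W`. -/
def minArena {V : Type} (A : Arena V) (W : ℝ) : Arena (V × ℝ) where
  VE := {p | p.1 ∈ A.VE}
  E := fun p q => A.E p.1 q.1 ∧ q.2 = min p.2 (A.w p.1 q.1)
  w := fun _ q => q.2
  init := (A.init, W)

/-- The arena `G_max`: vertices record the maximal weight seen so far. -/
def maxArena {V : Type} (A : Arena V) (W : ℝ) : Arena (V × ℝ) where
  VE := {p | p.1 ∈ A.VE}
  E := fun p q => A.E p.1 q.1 ∧ q.2 = max p.2 (A.w p.1 q.1)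
  w := fun _ q => q.2
  init := (A.init, W)

/-!
A play of `A.record c W` is a play of `A` decorated with the running record of its weights
(minimum for `c = min`, maximum for `c = max`), started at `W`. Forgetting the record maps the
strategies of the record arena onto those of `A` (recomputing the record gives a section), and
it preserves outcomes; the regret `⨅ σ, ⨆ τ, (⨆ σ', val σ' τ) - val σ τ` is invariant under
reindexing both strategy sets along surjections. Since `W` bounds every weight, the running
minimum from `W` is antitone and converges to the infimum of the weights, so both its `LimInf`
and its `LimSup` are the `Inf` payoff of the projected play; dually for `max`, `-W` and `Sup`.
-/

open Topology

theorem iInf_iSup_sub_comp_of_surjective {ι κ ι' κ' : Type*} (f : ι → κ → ℝ)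
    {gE : ι' → ι} {gA : κ' → κ} (hE : gE.Surjective) (hA : gA.Surjective) :
    ⨅ σ', ⨆ τ', ((⨆ σ'', f (gE σ'') (gA τ')) - f (gE σ') (gA τ')) =
      ⨅ σ, ⨆ τ, ((⨆ σ'', f σ'' τ) - f σ τ) := by
  have hsup : ∀ τ', ⨆ σ'', f (gE σ'') (gA τ') = ⨆ σ, f σ (gA τ') :=
    fun τ' => hE.iSup_comp (f · (gA τ'))
  simp only [hsup]
  rw [← hE.iInf_comp fun σ => ⨆ τ, (⨆ σ'', f σ'' τ) - f σ τ]
  exact iInf_congr fun σ' => hA.iSup_comp fun τ => (⨆ σ'', f σ'' τ) - f (gE σ') τ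

theorem tendsto_iInf_of_succ_eq_min {α : Type*} [ConditionallyCompleteLinearOrder α]
    [TopologicalSpace α] [OrderTopology α] {s u : ℕ → α}
    (hu : BddBelow (Set.range u)) (h0 : u 0 ≤ s 0) (hs : ∀ i, s (i + 1) = min (s i) (u i)) :
    Tendsto s atTop (𝓝 (⨅ i, u i)) := by
  have hlow : ∀ i, ⨅ j, u j ≤ s i := by
    intro i
    induction i with
    | zero => exact (ciInf_le hu 0).trans h0
    | succ i ih => exact (hs i).symm ▸ le_min ih (ciInf_le hu i)
  have hsb : BddBelow (Set.range s) := ⟨_, Set.forall_mem_range.2 hlow⟩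
  have hanti : Antitone s := antitone_nat_of_succ_le fun i => (hs i).symm ▸ min_le_left _ _
  have hlim : ⨅ i, s i = ⨅ i, u i :=
    le_antisymm (le_ciInf fun i => (ciInf_le hsb (i + 1)).trans ((hs i).symm ▸ min_le_right _ _))
      (le_ciInf hlow)
  exact hlim ▸ tendsto_atTop_ciInf hanti hsb

theorem tendsto_iSup_of_succ_eq_max {α : Type*} [ConditionallyCompleteLinearOrder α]
    [TopologicalSpace α] [OrderTopology α] {s u : ℕ → α}
    (hu : BddAbove (Set.range u)) (h0 : s 0 ≤ u 0) (hs : ∀ i, s (i + 1) = max (s i) (u i)) :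
    Tendsto s atTop (𝓝 (⨆ i, u i)) :=
  tendsto_iInf_of_succ_eq_min (α := αᵒᵈ) hu h0 hs

namespace Arena

variable {V : Type} (A : Arena V)

section Plays

variable {σ τ : List V → V}

theorem hist_succ (n : ℕ) :
    A.hist σ τ (n + 1) = A.hist σ τ n ++
      [if A.play σ τ n ∈ A.VE then σ (A.hist σ τ n) else τ (A.hist σ τ n)] := rfl

theorem play_succ (n : ℕ) :
    A.play σ τ (n + 1) =
      if A.play σ τ n ∈ A.VE then σ (A.hist σ τ n) else τ (A.hist σ τ n) := by
  rw [play, hist_succ, List.getLastD_concat]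

theorem head?_hist (n : ℕ) : (A.hist σ τ n).head? = some A.init := by
  induction n with
  | zero => rfl
  | succ n ih => rw [hist_succ, List.head?_append, ih]; rfl

theorem getLast?_hist (n : ℕ) : (A.hist σ τ n).getLast? = some (A.play σ τ n) := by
  cases n with
  | zero => rfl
  | succ n => rw [hist_succ, List.getLast?_concat, play_succ]

theorem E_play_succ_of_isHist (hσ : A.EveStrat σ) (hτ : A.AdamStrat τ) {n : ℕ}
    (h : A.IsHist (A.hist σ τ n) (A.play σ τ n)) :
    A.E (A.play σ τ n) (A.play σ τ (n + 1)) := by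
  rw [play_succ]
  split_ifs with hv
  · exact hσ _ _ h hv
  · exact hτ _ _ h hv

theorem isHist_hist (hσ : A.EveStrat σ) (hτ : A.AdamStrat τ) (n : ℕ) :
    A.IsHist (A.hist σ τ n) (A.play σ τ n) := by
  induction n with
  | zero => exact ⟨List.isChain_singleton _, rfl, rfl⟩
  | succ n ih =>
    refine ⟨?_, A.head?_hist (n + 1), A.getLast?_hist (n + 1)⟩
    rw [hist_succ, ← play_succ]
    refine ih.1.append (List.isChain_singleton _) fun x hx y hy => ?_
    rw [ih.2.2, Option.mem_some_iff] at hx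
    rw [List.head?_singleton, Option.mem_some_iff] at hy
    exact hx ▸ hy ▸ A.E_play_succ_of_isHist hσ hτ ih

theorem E_play_succ (hσ : A.EveStrat σ) (hτ : A.AdamStrat τ) (n : ℕ) :
    A.E (A.play σ τ n) (A.play σ τ (n + 1)) :=
  A.E_play_succ_of_isHist hσ hτ (A.isHist_hist hσ hτ n)

theorem abs_w_play_succ_le {W : ℝ} (hW : ∀ u v, A.E u v → |A.w u v| ≤ W)
    (hσ : A.EveStrat σ) (hτ : A.AdamStrat τ) (n : ℕ) :
    |A.w (A.play σ τ n) (A.play σ τ (n + 1))| ≤ W :=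
  hW _ _ (A.E_play_succ hσ hτ n)

theorem apply_play_eq_of_map_hist_eq {V' : Type} (B : Arena V') (f : V' → V)
    {σ' τ' : List V' → V'} {n : ℕ} (h : (B.hist σ' τ' n).map f = A.hist σ τ n) :
    f (B.play σ' τ' n) = A.play σ τ n := by
  have hlast := congrArg List.getLast? h
  rwa [List.getLast?_map, getLast?_hist, getLast?_hist, Option.map_some,
    Option.some_inj] at hlast

end Plays

theorem regret_eq_of_surjective {V' : Type} (B : Arena V') (valA : (ℕ → V) → ℝ)
    (valB : (ℕ → V') → ℝ) (fE fA : (List V' → V') → (List V → V))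
    (hfE : ∀ σ', B.EveStrat σ' → A.EveStrat (fE σ'))
    (hfA : ∀ τ', B.AdamStrat τ' → A.AdamStrat (fA τ'))
    (surjE : ∀ σ, A.EveStrat σ → ∃ σ', B.EveStrat σ' ∧ fE σ' = σ)
    (surjA : ∀ τ, A.AdamStrat τ → ∃ τ', B.AdamStrat τ' ∧ fA τ' = τ)
    (hval : ∀ σ' τ', B.EveStrat σ' → B.AdamStrat τ' →
      valB (B.play σ' τ') = valA (A.play (fE σ') (fA τ'))) :
    B.regret valB = A.regret valA := by
  let gE : {σ' // B.EveStrat σ' ∧ True} → {σ // A.EveStrat σ ∧ True} :=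
    fun σ' => ⟨fE σ', hfE _ σ'.2.1, trivial⟩
  let gA : {τ' // B.AdamStrat τ' ∧ True} → {τ // A.AdamStrat τ ∧ True} :=
    fun τ' => ⟨fA τ', hfA _ τ'.2.1, trivial⟩
  have hgE : gE.Surjective := fun σ => by
    obtain ⟨σ', hσ', h⟩ := surjE σ.1 σ.2.1
    exact ⟨⟨σ', hσ', trivial⟩, Subtype.ext h⟩
  have hgA : gA.Surjective := fun τ => by
    obtain ⟨τ', hτ', h⟩ := surjA τ.1 τ.2.1
    exact ⟨⟨τ', hτ', trivial⟩, Subtype.ext h⟩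
  have hval' : ∀ σ' τ', valB (B.play σ'.1 τ'.1) = valA (A.play (gE σ').1 (gA τ').1) :=
    fun σ' τ' => hval _ _ σ'.2.1 τ'.2.1
  have key := iInf_iSup_sub_comp_of_surjective (fun σ τ => valA (A.play σ.1 τ.1)) hgE hgA
  simp only [← hval'] at key
  exact key

section Record

variable (c : ℝ → ℝ → ℝ) (W : ℝ)

def record : Arena (V × ℝ) where
  VE := {p | p.1 ∈ A.VE}
  E := fun p q => A.E p.1 q.1 ∧ q.2 = c p.2 (A.w p.1 q.1)
  w := fun _ q => q.2
  init := (A.init, W)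

theorem minArena_eq_record : minArena A W = A.record min W := rfl

theorem maxArena_eq_record : maxArena A W = A.record max W := rfl

def annot : ℝ → List V → List (V × ℝ)
  | _, [] => []
  | r, [v] => [(v, r)]
  | r, v :: u :: l => (v, r) :: annot (c r (A.w v u)) (u :: l)

theorem map_fst_annot (r : ℝ) (l : List V) : (A.annot c r l).map Prod.fst = l := by
  induction l generalizing r with
  | nil => rfl
  | cons v t ih =>
    cases t with
    | nil => rfl
    | cons u t => rw [annot, List.map_cons, ih]

theorem head?_annot (r : ℝ) (v : V) (l : List V) :
    (A.annot c r (v :: l)).head? = some (v, r) := by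
  cases l <;> rfl

theorem isChain_annot (r : ℝ) {l : List V} (hl : l.IsChain A.E) :
    (A.annot c r l).IsChain (A.record c W).E := by
  induction l generalizing r with
  | nil => exact List.isChain_nil
  | cons v t ih =>
    cases t with
    | nil => exact List.isChain_singleton _
    | cons u t =>
      obtain ⟨hvu, ht⟩ := List.isChain_cons_cons.mp hl
      rw [annot, List.isChain_cons]
      refine ⟨fun p hp => ?_, ih _ ht⟩
      rw [head?_annot, Option.mem_some_iff] at hp
      exact hp ▸ ⟨hvu, rfl⟩

theorem annot_map_fst_of_isChain {p : List (V × ℝ)} (hp : p.IsChain (A.record c W).E)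
    {q : V × ℝ} (hq : p.head? = some q) : A.annot c q.2 (p.map Prod.fst) = p := by
  induction p generalizing q with
  | nil => cases hq
  | cons x t ih =>
    obtain rfl : x = q := Option.some_inj.mp hq
    cases t with
    | nil => rfl
    | cons y t =>
      obtain ⟨⟨-, hy⟩, ht⟩ := List.isChain_cons_cons.mp hp
      rw [List.map_cons, List.map_cons, annot, ← hy, ← List.map_cons, ih ht rfl]

theorem isHist_annot {l : List V} {v : V} (h : A.IsHist l v) :
    ∃ r, (A.record c W).IsHist (A.annot c W l) (v, r) := by
  obtain ⟨hchain, hhead, hlast⟩ := h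
  obtain ⟨t, rfl⟩ : ∃ t, l = A.init :: t := by
    cases l with
    | nil => cases hhead
    | cons a t => exact ⟨t, by rw [Option.some_inj.mp hhead]⟩
  have hlast' : (A.annot c W (A.init :: t)).getLast?.map Prod.fst = some v := by
    rw [← List.getLast?_map, map_fst_annot, hlast]
  obtain ⟨q, hq, rfl⟩ := Option.map_eq_some_iff.mp hlast'
  exact ⟨q.2, A.isChain_annot c W W hchain, A.head?_annot c W _ t, hq⟩

theorem isHist_map_fst {p : List (V × ℝ)} {q : V × ℝ} (hp : (A.record c W).IsHist p q) :
    A.IsHist (p.map Prod.fst) q.1 :=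
  ⟨List.isChain_map_of_isChain _ (fun _ _ h => h.1) hp.1,
    by rw [List.head?_map, hp.2.1]; rfl, by rw [List.getLast?_map, hp.2.2]; rfl⟩

noncomputable def liftStrat (s : List V → V) : List (V × ℝ) → V × ℝ := fun p =>
  (s (p.map Prod.fst),
    c (p.getLastD (A.init, W)).2 (A.w (p.getLastD (A.init, W)).1 (s (p.map Prod.fst))))

def projStrat (s' : List (V × ℝ) → V × ℝ) : List V → V := fun l =>
  (s' (A.annot c W l)).1

theorem projStrat_liftStrat (s : List V → V) : A.projStrat c W (A.liftStrat c W s) = s := by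
  funext l
  simp only [projStrat, liftStrat, map_fst_annot]

variable {c W}

theorem E_liftStrat {P : V → Prop} {s : List V → V}
    (hs : ∀ l v, A.IsHist l v → P v → A.E v (s l)) {p : List (V × ℝ)} {q : V × ℝ}
    (hp : (A.record c W).IsHist p q) (hq : P q.1) :
    (A.record c W).E q (A.liftStrat c W s p) := by
  have hlast : p.getLastD (A.init, W) = q := by
    rw [List.getLastD_eq_getLast?, hp.2.2]; rfl
  exact ⟨hs _ _ (A.isHist_map_fst c W hp) hq, by rw [liftStrat, hlast]⟩

theorem E_projStrat {P : V → Prop} {s' : List (V × ℝ) → V × ℝ}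
    (hs : ∀ p q, (A.record c W).IsHist p q → P q.1 → (A.record c W).E q (s' p))
    {l : List V} {v : V} (hl : A.IsHist l v) (hv : P v) : A.E v (A.projStrat c W s' l) := by
  obtain ⟨r, hr⟩ := A.isHist_annot c W hl
  exact (hs _ _ hr hv).1

theorem eveStrat_liftStrat {σ : List V → V} (hσ : A.EveStrat σ) :
    (A.record c W).EveStrat (A.liftStrat c W σ) :=
  fun _ _ hp hq => A.E_liftStrat hσ hp hq

theorem adamStrat_liftStrat {τ : List V → V} (hτ : A.AdamStrat τ) :
    (A.record c W).AdamStrat (A.liftStrat c W τ) :=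
  fun _ _ hp hq => A.E_liftStrat hτ hp hq

theorem eveStrat_projStrat {σ' : List (V × ℝ) → V × ℝ}
    (hσ' : (A.record c W).EveStrat σ') :
    A.EveStrat (A.projStrat c W σ') :=
  fun _ _ hl hv => A.E_projStrat (P := (· ∈ A.VE)) hσ' hl hv

theorem adamStrat_projStrat {τ' : List (V × ℝ) → V × ℝ}
    (hτ' : (A.record c W).AdamStrat τ') :
    A.AdamStrat (A.projStrat c W τ') :=
  fun _ _ hl hv => A.E_projStrat (P := (· ∉ A.VE)) hτ' hl hv

variable {σ' τ' : List (V × ℝ) → V × ℝ}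

theorem map_fst_hist_record (hσ' : (A.record c W).EveStrat σ')
    (hτ' : (A.record c W).AdamStrat τ') (n : ℕ) :
    ((A.record c W).hist σ' τ' n).map Prod.fst =
      A.hist (A.projStrat c W σ') (A.projStrat c W τ') n := by
  induction n with
  | zero => rfl
  | succ n ih =>
    have hplay := A.apply_play_eq_of_map_hist_eq _ _ ih
    have hannot : A.annot c W (A.hist (A.projStrat c W σ') (A.projStrat c W τ') n) =
        (A.record c W).hist σ' τ' n := by
      rw [← ih]
      exact A.annot_map_fst_of_isChain c W ((A.record c W).isHist_hist hσ' hτ' n).1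
        ((A.record c W).head?_hist n)
    have hmem : (A.record c W).play σ' τ' n ∈ (A.record c W).VE ↔
        A.play (A.projStrat c W σ') (A.projStrat c W τ') n ∈ A.VE := by
      rw [← hplay]; rfl
    rw [hist_succ, hist_succ, List.map_append, ih, ← hannot]
    simp only [hmem]
    split_ifs <;> rfl

theorem fst_play_record (hσ' : (A.record c W).EveStrat σ')
    (hτ' : (A.record c W).AdamStrat τ') (n : ℕ) :
    ((A.record c W).play σ' τ' n).1 = A.play (A.projStrat c W σ') (A.projStrat c W τ') n :=
  A.apply_play_eq_of_map_hist_eq _ _ (A.map_fst_hist_record hσ' hτ' n)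

theorem snd_play_record_succ (hσ' : (A.record c W).EveStrat σ')
    (hτ' : (A.record c W).AdamStrat τ') (n : ℕ) :
    ((A.record c W).play σ' τ' (n + 1)).2 = c ((A.record c W).play σ' τ' n).2
      (A.w (A.play (A.projStrat c W σ') (A.projStrat c W τ') n)
        (A.play (A.projStrat c W σ') (A.projStrat c W τ') (n + 1))) := by
  rw [← A.fst_play_record hσ' hτ', ← A.fst_play_record hσ' hτ']
  exact ((A.record c W).E_play_succ hσ' hτ' n).2

theorem regret_record_eq (valA : (ℕ → V) → ℝ) (valB : (ℕ → V × ℝ) → ℝ)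
    (hval : ∀ σ' τ', (A.record c W).EveStrat σ' → (A.record c W).AdamStrat τ' →
      valB ((A.record c W).play σ' τ') =
        valA (A.play (A.projStrat c W σ') (A.projStrat c W τ'))) :
    (A.record c W).regret valB = A.regret valA :=
  A.regret_eq_of_surjective _ valA valB _ _ (fun _ => A.eveStrat_projStrat)
    (fun _ => A.adamStrat_projStrat)
    (fun σ hσ => ⟨_, A.eveStrat_liftStrat hσ, A.projStrat_liftStrat c W σ⟩)
    (fun τ hτ => ⟨_, A.adamStrat_liftStrat hτ, A.projStrat_liftStrat c W τ⟩) hval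

end Record

variable {W : ℝ} {σ' τ' : List (V × ℝ) → V × ℝ}

theorem tendsto_weight_record_min (hW : ∀ u v, A.E u v → |A.w u v| ≤ W)
    (hσ' : (A.record min W).EveStrat σ') (hτ' : (A.record min W).AdamStrat τ') :
    Tendsto (fun i => (A.record min W).w ((A.record min W).play σ' τ' i)
        ((A.record min W).play σ' τ' (i + 1))) atTop
      (𝓝 (A.InfVal (A.play (A.projStrat min W σ') (A.projStrat min W τ')))) := by
  have hw := A.abs_w_play_succ_le hW (A.eveStrat_projStrat hσ') (A.adamStrat_projStrat hτ')
  exact (tendsto_iInf_of_succ_eq_min (s := fun i => ((A.record min W).play σ' τ' i).2)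
    ⟨-W, Set.forall_mem_range.2 fun i => (abs_le.mp (hw i)).1⟩
    (abs_le.mp (hw 0)).2 (A.snd_play_record_succ hσ' hτ')).comp (tendsto_add_atTop_nat 1)

theorem tendsto_weight_record_max (hW : ∀ u v, A.E u v → |A.w u v| ≤ W)
    (hσ' : (A.record max (-W)).EveStrat σ') (hτ' : (A.record max (-W)).AdamStrat τ') :
    Tendsto (fun i => (A.record max (-W)).w ((A.record max (-W)).play σ' τ' i)
        ((A.record max (-W)).play σ' τ' (i + 1))) atTop
      (𝓝 (A.SupVal (A.play (A.projStrat max (-W) σ') (A.projStrat max (-W) τ')))) := by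
  have hw := A.abs_w_play_succ_le hW (A.eveStrat_projStrat hσ') (A.adamStrat_projStrat hτ')
  exact (tendsto_iSup_of_succ_eq_max (s := fun i => ((A.record max (-W)).play σ' τ' i).2)
    ⟨W, Set.forall_mem_range.2 fun i => (abs_le.mp (hw i)).2⟩
    (abs_le.mp (hw 0)).1 (A.snd_play_record_succ hσ' hτ')).comp (tendsto_add_atTop_nat 1)

end Arena

theorem regret_inf_sup_prefix_independent_general {V : Type} (A : Arena V)
    (W : ℝ) (hW : IsGreatest {x : ℝ | ∃ u v, A.E u v ∧ x = |A.w u v|} W) :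
    A.regret A.InfVal = (minArena A W).regret (minArena A W).LimInfVal ∧
    A.regret A.InfVal = (minArena A W).regret (minArena A W).LimSupVal ∧
    A.regret A.SupVal = (maxArena A (-W)).regret (maxArena A (-W)).LimSupVal ∧
    A.regret A.SupVal = (maxArena A (-W)).regret (maxArena A (-W)).LimInfVal := by
  have hW' : ∀ u v, A.E u v → |A.w u v| ≤ W := fun u v h => hW.2 ⟨u, v, h, rfl⟩
  rw [A.minArena_eq_record, A.maxArena_eq_record]
  refine ⟨?_, ?_, ?_, ?_⟩ <;> refine (A.regret_record_eq _ _ fun σ' τ' hσ' hτ' => ?_).symm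
  · exact (A.tendsto_weight_record_min hW' hσ' hτ').liminf_eq
  · exact (A.tendsto_weight_record_min hW' hσ' hτ').limsup_eq
  · exact (A.tendsto_weight_record_max hW' hσ' hτ').limsup_eq
  · exact (A.tendsto_weight_record_max hW' hσ' hτ').liminf_eq

/-- Lemma 1, prefindepping. For a weighted arena `G` with
integer weights of maximal absolute value `W`, the regret of `G` under the
`Inf` payoff equals the regret of `G_min` (with initial record `W`) under
`LimInf` (equivalently `LimSup`), and the regret of `G` under the `Sup`
payoff equals the regret of `G_max` (with initial record `-W`) under `LimSup`
(equivalently `LimInf`). -/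
theorem regret_inf_sup_prefix_independent {V : Type} [Fintype V] (A : Arena V)
    (htotal : A.Total)
    (hint : ∀ u v, A.E u v → ∃ k : ℤ, A.w u v = (k : ℝ))
    (W : ℝ) (hW : IsGreatest {x : ℝ | ∃ u v, A.E u v ∧ x = |A.w u v|} W) :
    A.regret A.InfVal = (minArena A W).regret (minArena A W).LimInfVal ∧
    A.regret A.InfVal = (minArena A W).regret (minArena A W).LimSupVal ∧
    A.regret A.SupVal = (maxArena A (-W)).regret (maxArena A (-W)).LimSupVal ∧
    A.regret A.SupVal = (maxArena A (-W)).regret (maxArena A (-W)).LimInfVal :=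
  regret_inf_sup_prefix_independent_general A W hW
end
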